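/- arXiv:2306.03135 — 3 statements merged into one kernel-verified Lean document; each statement's English description precedes it below -/
import Mathlib

section
/- Let A, B ∈ T(l×m×n, ℝ) be non-degenerate 3-way arrays with frontal slices A_1, …, A_n and B_1, …, B_n. Define r(A) ∈ T((l+m)×(l+m)×n, ℝ) by letting its i-th frontal slice be the (l+m)×(l+m) block matrix with block (1,2) (of size l×m) equal to A_i and all other blocks zero, and define r(B) analogously. Then there exist orthogonal matrices P ∈ O(l, ℝ), Q ∈ O(m, ℝ), R ∈ O(n, ℝ) with P A Q = B^R if and only if there exist orthogonal matrices S ∈ O(l+m, ℝ) and T ∈ O(n, ℝ) with S^{-1} r(A) S = r(B)^T. -/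
open Matrix

/-- A 3-way array (given by its tuple of frontal slices) is non-degenerate if its
horizontal, lateral and frontal slices are each linearly independent families. -/
def Nondegenerate₃ {l m n : ℕ} (A : Fin n → Matrix (Fin l) (Fin m) ℝ) : Prop :=
  LinearIndependent ℝ (fun i : Fin l => fun (j : Fin m) (k : Fin n) => A k i j) ∧
  LinearIndependent ℝ (fun j : Fin m => fun (i : Fin l) (k : Fin n) => A k i j) ∧
  LinearIndependent ℝ A

/-- The padding `r(A) ∈ T((l+m)×(l+m)×n, ℝ)` whose `i`-th frontal slice has block `(1,2)`
(of size `l×m`) equal to `Aᵢ` and all other blocks zero. -/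
noncomputable def padUp {l m n : ℕ} (A : Fin n → Matrix (Fin l) (Fin m) ℝ) :
    Fin n → Matrix (Fin (l + m)) (Fin (l + m)) ℝ :=
  fun i => Matrix.of fun p q =>
    if h : (p : ℕ) < l ∧ l ≤ (q : ℕ) then
      A i ⟨p, h.1⟩ ⟨(q : ℕ) - l, by have := q.isLt; omega⟩
    else 0

private lemma star_eq_transpose' {ι : Type*} (M : Matrix ι ι ℝ) : star M = Mᵀ := by
  ext i j; simp [Matrix.star_apply]

private lemma pad_eq {l m n : ℕ} (A : Fin n → Matrix (Fin l) (Fin m) ℝ) (k : Fin n) :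
    (reindexAlgEquiv ℝ ℝ finSumFinEquiv.symm) (padUp A k)
      = fromBlocks 0 (A k) 0 0 := by
  rw [reindexAlgEquiv_apply]
  ext p q
  rcases p with i | i <;> rcases q with j | j <;>
    simp [padUp, fromBlocks, finSumFinEquiv_apply_left, finSumFinEquiv_apply_right]

private lemma sum_smul_fromBlocks {l m n : ℕ} (g : Fin n → ℝ)
    (M : Fin n → Matrix (Fin l) (Fin m) ℝ) :
    ∑ k : Fin n, g k • (fromBlocks 0 (M k) 0 0 : Matrix (Fin l ⊕ Fin m) (Fin l ⊕ Fin m) ℝ)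
      = fromBlocks 0 (∑ k : Fin n, g k • M k) 0 0 := by
  ext p q
  rcases p with i | i <;> rcases q with j | j <;>
    simp [fromBlocks, Matrix.sum_apply]

private lemma toBlocks₁₁_one {a b : Type*} [DecidableEq a] [DecidableEq b] :
    (1 : Matrix (a ⊕ b) (a ⊕ b) ℝ).toBlocks₁₁ = 1 := by
  ext i j; simp [Matrix.toBlocks₁₁, Matrix.one_apply, Sum.inl.injEq]

private lemma toBlocks₁₂_one {a b : Type*} [DecidableEq a] [DecidableEq b] :
    (1 : Matrix (a ⊕ b) (a ⊕ b) ℝ).toBlocks₁₂ = 0 := by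
  ext i j; simp [Matrix.toBlocks₁₂, Matrix.one_apply]

private lemma toBlocks₂₂_one {a b : Type*} [DecidableEq a] [DecidableEq b] :
    (1 : Matrix (a ⊕ b) (a ⊕ b) ℝ).toBlocks₂₂ = 1 := by
  ext i j; simp [Matrix.toBlocks₂₂, Matrix.one_apply, Sum.inr.injEq]

/-- For non-degenerate `A, B ∈ T(l×m×n, ℝ)`, there are orthogonal
`P ∈ O(l,ℝ)`, `Q ∈ O(m,ℝ)`, `R ∈ O(n,ℝ)` with `P A Q = B^R` iff there are orthogonal
`S ∈ O(l+m,ℝ)`, `T ∈ O(n,ℝ)` with `S⁻¹ r(A) S = r(B)^T`. -/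
theorem stmt_9 (l m n : ℕ) (A B : Fin n → Matrix (Fin l) (Fin m) ℝ)
    (hA : Nondegenerate₃ A) (hB : Nondegenerate₃ B) :
    (∃ P ∈ Matrix.orthogonalGroup (Fin l) ℝ, ∃ Q ∈ Matrix.orthogonalGroup (Fin m) ℝ,
        ∃ R ∈ Matrix.orthogonalGroup (Fin n) ℝ,
        ∀ k : Fin n, P * A k * Q = ∑ k' : Fin n, R k' k • B k')
      ↔ (∃ S ∈ Matrix.orthogonalGroup (Fin (l + m)) ℝ, ∃ T ∈ Matrix.orthogonalGroup (Fin n) ℝ,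
          ∀ k : Fin n, S⁻¹ * padUp A k * S = ∑ k' : Fin n, T k' k • padUp B k') := by
  set f := reindexAlgEquiv ℝ ℝ (finSumFinEquiv (m := l) (n := m)).symm with hf
  constructor
  · rintro ⟨P, hP, Q, hQ, R, hR, hPQR⟩
    rw [Matrix.mem_orthogonalGroup_iff] at hP hQ
    have hP' : Pᵀ * P = 1 := mul_eq_one_comm.mp hP
    have hQ' : Qᵀ * Q = 1 := mul_eq_one_comm.mp hQ
    set S0 : Matrix (Fin l ⊕ Fin m) (Fin l ⊕ Fin m) ℝ := fromBlocks Pᵀ 0 0 Q with hS0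
    set S := f.symm S0 with hS
    have hfS : f S = S0 := f.apply_symm_apply S0
    have hST : f Sᵀ = S0ᵀ := by
      rw [hf, reindexAlgEquiv_apply, ← transpose_reindex, ← reindexAlgEquiv_apply ℝ ℝ, ← hf, hfS]
    have hSS : S * Sᵀ = 1 := by
      apply f.injective
      rw [_root_.map_mul, _root_.map_one, hfS, hST, hS0, fromBlocks_transpose, fromBlocks_multiply]
      simp [hP', mul_eq_one_comm.mp hQ', fromBlocks_one]
    have hSS' : Sᵀ * S = 1 := mul_eq_one_comm.mp hSS
    have hSinv : S⁻¹ = Sᵀ := Matrix.inv_eq_left_inv hSS'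
    refine ⟨S, ?_, R, hR, ?_⟩
    · rw [Matrix.mem_orthogonalGroup_iff]; exact hSS
    · intro k
      apply f.injective
      rw [hSinv, _root_.map_mul, _root_.map_mul, hfS, hST, pad_eq, map_sum]
      have : ∀ k' : Fin n, f (R k' k • padUp B k') = R k' k • fromBlocks 0 (B k') 0 0 := by
        intro k'; rw [_root_.map_smul, pad_eq]
      simp only [this, sum_smul_fromBlocks]
      rw [hS0, fromBlocks_transpose, fromBlocks_multiply, fromBlocks_multiply]
      simp only [Matrix.mul_zero, Matrix.zero_mul, add_zero, zero_add,
        transpose_transpose, transpose_zero]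
      rw [hPQR k]
  · rintro ⟨S, hSo, T, hT, hST⟩
    rw [Matrix.mem_orthogonalGroup_iff] at hSo
    have hSS' : Sᵀ * S = 1 := mul_eq_one_comm.mp hSo
    have hSinv : S⁻¹ = Sᵀ := Matrix.inv_eq_left_inv hSS'
    -- rewrite the hypothesis as `padUp A k * S = S * (∑ ...)`
    have hkey : ∀ k : Fin n, padUp A k * S = S * ∑ k' : Fin n, T k' k • padUp B k' := by
      intro k
      have h := hST k
      rw [hSinv] at h
      calc padUp A k * S = S * (Sᵀ * padUp A k * S) := by
            rw [Matrix.mul_assoc Sᵀ, ← Matrix.mul_assoc S, hSo, Matrix.one_mul]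
        _ = S * ∑ k' : Fin n, T k' k • padUp B k' := by rw [h]
    set C : Fin n → Matrix (Fin l) (Fin m) ℝ := fun k => ∑ k' : Fin n, T k' k • B k' with hC
    set S' := f S with hS'
    set S11 := S'.toBlocks₁₁ with h11
    set S12 := S'.toBlocks₁₂ with h12
    set S21 := S'.toBlocks₂₁ with h21
    set S22 := S'.toBlocks₂₂ with h22
    have hSblocks : S' = fromBlocks S11 S12 S21 S22 := (fromBlocks_toBlocks S').symm
    have hST' : f Sᵀ = S'ᵀ := by
      rw [hf, reindexAlgEquiv_apply, ← transpose_reindex, ← reindexAlgEquiv_apply ℝ ℝ, ← hf, hS']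
    -- translated key equation in block form
    have hkey' : ∀ k : Fin n,
        fromBlocks (A k * S21) (A k * S22) 0 0 = fromBlocks 0 (S11 * C k) 0 (S21 * C k) := by
      intro k
      have h := congrArg f (hkey k)
      rw [_root_.map_mul, _root_.map_mul, pad_eq, map_sum] at h
      have h2 : ∀ k' : Fin n, f (T k' k • padUp B k') = T k' k • fromBlocks 0 (B k') 0 0 := by
        intro k'; rw [_root_.map_smul, pad_eq]
      simp only [h2, sum_smul_fromBlocks, ← hS', ← hC] at h
      rw [hSblocks, fromBlocks_multiply, fromBlocks_multiply] at h
      simpa using h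
    have e11 : ∀ k : Fin n, A k * S21 = 0 := by
      intro k
      have := congrArg Matrix.toBlocks₁₁ (hkey' k)
      simpa [toBlocks_fromBlocks₁₁] using this
    have e12 : ∀ k : Fin n, A k * S22 = S11 * C k := by
      intro k
      have := congrArg Matrix.toBlocks₁₂ (hkey' k)
      simpa [toBlocks_fromBlocks₁₂] using this
    -- lateral nondegeneracy kills S21
    have hS21 : S21 = 0 := by
      ext j c
      have hli := Fintype.linearIndependent_iff.mp hA.2.1 (fun j => S21 j c) ?_ j
      · simpa using hli
      · funext i k
        have h0 : (A k * S21) i c = 0 := by rw [e11 k]; simp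
        rw [Matrix.mul_apply] at h0
        simpa [Finset.sum_apply, mul_comm] using h0
    -- orthogonality in block form
    have hSS'2 : S'ᵀ * S' = 1 := by
      have := congrArg f hSS'
      rwa [_root_.map_mul, _root_.map_one, hST', ← hS'] at this
    rw [hSblocks, hS21, fromBlocks_transpose, fromBlocks_multiply] at hSS'2
    have o11 : S11ᵀ * S11 = 1 := by
      have := congrArg Matrix.toBlocks₁₁ hSS'2
      simpa [toBlocks₁₁_one] using this
    have o12 : S11ᵀ * S12 = 0 := by
      have := congrArg Matrix.toBlocks₁₂ hSS'2
      simpa [toBlocks₁₂_one] using this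
    have o22 : S12ᵀ * S12 + S22ᵀ * S22 = 1 := by
      have := congrArg Matrix.toBlocks₂₂ hSS'2
      simpa [toBlocks₂₂_one] using this
    have hS11 : S11 * S11ᵀ = 1 := mul_eq_one_comm.mp o11
    have hS12 : S12 = 0 := by
      calc S12 = (S11 * S11ᵀ) * S12 := by rw [hS11, Matrix.one_mul]
        _ = S11 * (S11ᵀ * S12) := by rw [Matrix.mul_assoc]
        _ = 0 := by rw [o12, Matrix.mul_zero]
    have o22' : S22ᵀ * S22 = 1 := by
      rw [hS12] at o22; simpa using o22
    refine ⟨S11ᵀ, ?_, S22, ?_, T, hT, ?_⟩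
    · rw [Matrix.mem_orthogonalGroup_iff, transpose_transpose]
      exact o11
    · rw [Matrix.mem_orthogonalGroup_iff]
      exact mul_eq_one_comm.mp o22'
    · intro k
      rw [Matrix.mul_assoc, e12 k, ← Matrix.mul_assoc, o11, Matrix.one_mul]
end

section
/- Let A, B ∈ T(l×l×m, ℝ) be 3-way arrays with frontal slices A_1, …, A_m ∈ M(l, ℝ) and B_1, …, B_m ∈ M(l, ℝ), and assume that A_1, …, A_m are linearly independent and B_1, …, B_m are linearly independent. Define à ∈ T((l+m)×(l+m)×(l+m), ℝ) by its frontal slices: Ã_i = 0 for i ∈ [l], and for j ∈ [m], Ã_{l+j} is the (l+m)×(l+m) block matrix with block (1,1) (of size l×l) equal to A_j and all other blocks zero; define B̃ analogously from B. Then there exist orthogonal matrices P ∈ O(l, ℝ) and Q ∈ O(m, ℝ) with Pᵗ A P = B^Q if and only if there exists an orthogonal matrix P ∈ O(l+m, ℝ) with (Pᵗ Ã P)^P = B̃. -/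
open Matrix

/-- The padding `Ã ∈ T((l+m)×(l+m)×(l+m), ℝ)` of `A ∈ T(l×l×m, ℝ)`: the first `l` frontal
slices are zero, and for `j ∈ [m]` the `(l+j)`-th frontal slice is the block matrix with
block `(1,1)` (of size `l×l`) equal to `Aⱼ` and all other blocks zero. -/
noncomputable def cubicPad {l m : ℕ} (A : Fin m → Matrix (Fin l) (Fin l) ℝ) :
    Fin (l + m) → Matrix (Fin (l + m)) (Fin (l + m)) ℝ :=
  fun i => Matrix.of fun p q =>
    if h : l ≤ (i : ℕ) ∧ (p : ℕ) < l ∧ (q : ℕ) < l then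
      A ⟨(i : ℕ) - l, by have := i.isLt; omega⟩ ⟨p, h.2.1⟩ ⟨q, h.2.2⟩
    else 0


noncomputable def padS {l m : ℕ} (A : Fin m → Matrix (Fin l) (Fin l) ℝ) :
    Fin l ⊕ Fin m → Matrix (Fin l ⊕ Fin m) (Fin l ⊕ Fin m) ℝ :=
  Sum.elim (fun _ => 0) (fun j => fromBlocks (A j) 0 0 0)

lemma cubicPad_submatrix {l m : ℕ} (A : Fin m → Matrix (Fin l) (Fin l) ℝ) (s : Fin l ⊕ Fin m) :
    (cubicPad A (finSumFinEquiv s)).submatrix finSumFinEquiv finSumFinEquiv = padS A s := by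
  ext p q
  cases s with
  | inl i =>
    have hi : ¬ (l ≤ ((finSumFinEquiv (Sum.inl i) : Fin (l + m)) : ℕ)) := by
      rw [finSumFinEquiv_apply_left]; simp only [Fin.coe_castAdd]; omega
    simp only [submatrix_apply, cubicPad, of_apply, padS, Sum.elim_inl, Matrix.zero_apply]
    rw [dif_neg (by tauto)]
  | inr j =>
    have hj : ((finSumFinEquiv (Sum.inr j) : Fin (l + m)) : ℕ) = l + j := by
      rw [finSumFinEquiv_apply_right]; simp only [Fin.coe_natAdd]
    cases p with
    | inl p =>
      cases q with
      | inl q =>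
        have hp : ((finSumFinEquiv (Sum.inl p) : Fin (l + m)) : ℕ) = p := by
          rw [finSumFinEquiv_apply_left]; simp only [Fin.coe_castAdd]
        have hq : ((finSumFinEquiv (Sum.inl q) : Fin (l + m)) : ℕ) = q := by
          rw [finSumFinEquiv_apply_left]; simp only [Fin.coe_castAdd]
        simp only [submatrix_apply, cubicPad, of_apply, padS, Sum.elim_inr]
        rw [dif_pos (by rw [hp, hq, hj]; exact ⟨by omega, p.isLt, q.isLt⟩)]
        rw [Matrix.fromBlocks_apply₁₁]
        congr 1
        · congr 1
          rw [hj]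
          omega
      | inr q =>
        have hq : ¬ (((finSumFinEquiv (Sum.inr q) : Fin (l + m)) : ℕ) < l) := by
          rw [finSumFinEquiv_apply_right]; simp only [Fin.coe_natAdd]; omega
        simp only [submatrix_apply, cubicPad, of_apply, padS, Sum.elim_inr]
        rw [dif_neg (by tauto)]
        rfl
    | inr p =>
      have hp : ¬ (((finSumFinEquiv (Sum.inr p) : Fin (l + m)) : ℕ) < l) := by
        rw [finSumFinEquiv_apply_right]; simp only [Fin.coe_natAdd]; omega
      simp only [submatrix_apply, cubicPad, of_apply, padS, Sum.elim_inr]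
      rw [dif_neg (by tauto)]
      cases q <;> rfl

lemma sum_fromBlocks {l m : ℕ} {ι : Type*} (s : Finset ι) (f : ι → Matrix (Fin l) (Fin l) ℝ) :
    ∑ k ∈ s, fromBlocks (f k) (0 : Matrix (Fin l) (Fin m) ℝ) (0 : Matrix (Fin m) (Fin l) ℝ)
        (0 : Matrix (Fin m) (Fin m) ℝ)
      = fromBlocks (∑ k ∈ s, f k) 0 0 0 := by
  ext (p | p) (q | q) <;>
    simp [Matrix.sum_apply, fromBlocks_apply₁₁, fromBlocks_apply₁₂, fromBlocks_apply₂₁,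
      fromBlocks_apply₂₂]

/-- The sum-type reformulation of the padded conjugacy condition. -/
lemma bridge {l m : ℕ} (A B : Fin m → Matrix (Fin l) (Fin l) ℝ)
    (N : Matrix (Fin l ⊕ Fin m) (Fin l ⊕ Fin m) ℝ) :
    (∀ k : Fin (l + m),
        (∑ k' : Fin (l + m),
            (N.submatrix finSumFinEquiv.symm finSumFinEquiv.symm) k' k •
              ((N.submatrix finSumFinEquiv.symm finSumFinEquiv.symm)ᵀ * cubicPad A k' *
                (N.submatrix finSumFinEquiv.symm finSumFinEquiv.symm)))
          = cubicPad B k)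
      ↔ (∀ s : Fin l ⊕ Fin m, ∑ t, N t s • (Nᵀ * padS A t * N) = padS B s) := by
  set e : Fin l ⊕ Fin m ≃ Fin (l + m) := finSumFinEquiv with he
  set Φ : Matrix (Fin (l + m)) (Fin (l + m)) ℝ ≃ₐ[ℝ] Matrix (Fin l ⊕ Fin m) (Fin l ⊕ Fin m) ℝ :=
    Matrix.reindexAlgEquiv ℝ ℝ e.symm with hΦ
  have hΦ_apply : ∀ X : Matrix (Fin (l + m)) (Fin (l + m)) ℝ, Φ X = X.submatrix e e := by
    intro X
    simp [hΦ, Matrix.reindexAlgEquiv_apply, Matrix.reindex_apply]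
  have hP : Φ (N.submatrix e.symm e.symm) = N := by
    rw [hΦ_apply]
    ext p q
    simp
  have hPT : Φ ((N.submatrix e.symm e.symm)ᵀ) = Nᵀ := by
    rw [transpose_submatrix, hΦ_apply]
    ext p q
    simp
  rw [← Equiv.forall_congr_right e]
  refine forall_congr' fun s => ?_
  rw [← Φ.injective.eq_iff]
  have hsum : Φ (∑ k' : Fin (l + m),
      (N.submatrix e.symm e.symm) k' (e s) •
        ((N.submatrix e.symm e.symm)ᵀ * cubicPad A k' * (N.submatrix e.symm e.symm)))
      = ∑ t, N t s • (Nᵀ * padS A t * N) := by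
    rw [map_sum, ← Equiv.sum_comp e]
    refine Finset.sum_congr rfl fun t _ => ?_
    have hc : N.submatrix (⇑e.symm) (⇑e.symm) (e t) (e s) = N t s := by simp
    rw [_root_.map_smul, _root_.map_mul, _root_.map_mul, hPT, hP, hc]
    have hpad : Φ (cubicPad A (e t)) = padS A t := by
      rw [hΦ_apply]; exact cubicPad_submatrix A t
    rw [hpad]
  rw [hsum]
  have : Φ (cubicPad B (e s)) = padS B s := by
    rw [hΦ_apply]
    exact cubicPad_submatrix B s
  rw [this]

lemma toBlocks11_one {l m : ℕ} :
    (Matrix.toBlocks₁₁ (1 : Matrix (Fin l ⊕ Fin m) (Fin l ⊕ Fin m) ℝ)) = 1 := by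
  ext i j
  simp [Matrix.toBlocks₁₁, Matrix.one_apply]

lemma toBlocks22_one {l m : ℕ} :
    (Matrix.toBlocks₂₂ (1 : Matrix (Fin l ⊕ Fin m) (Fin l ⊕ Fin m) ℝ)) = 1 := by
  ext i j
  simp [Matrix.toBlocks₂₂, Matrix.one_apply]

/-- Let `A, B ∈ T(l×l×m, ℝ)` with linearly independent frontal slices.
There are orthogonal `P ∈ O(l,ℝ)`, `Q ∈ O(m,ℝ)` with `Pᵗ A P = B^Q` iff there is an orthogonal
`P ∈ O(l+m,ℝ)` with `(Pᵗ Ã P)^P = B̃`. -/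
theorem stmt_12 (l m : ℕ) (A B : Fin m → Matrix (Fin l) (Fin l) ℝ)
    (hA : LinearIndependent ℝ A) (hB : LinearIndependent ℝ B) :
    (∃ P ∈ Matrix.orthogonalGroup (Fin l) ℝ, ∃ Q ∈ Matrix.orthogonalGroup (Fin m) ℝ,
        ∀ k : Fin m, Pᵀ * A k * P = ∑ k' : Fin m, Q k' k • B k')
      ↔ (∃ P ∈ Matrix.orthogonalGroup (Fin (l + m)) ℝ,
          ∀ k : Fin (l + m),
            (∑ k' : Fin (l + m), P k' k • (Pᵀ * cubicPad A k' * P)) = cubicPad B k) := by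
  classical
  set e : Fin l ⊕ Fin m ≃ Fin (l + m) := finSumFinEquiv with he
  constructor
  · rintro ⟨P, hP, Q, hQ, hPQ⟩
    have hPPt : P * Pᵀ = 1 := by
      have := (Matrix.mem_orthogonalGroup_iff _ ℝ).mp hP
      exact this
    have hQQt : Q * Qᵀ = 1 := by
      have := (Matrix.mem_orthogonalGroup_iff _ ℝ).mp hQ
      exact this
    have hQtQ : Qᵀ * Q = 1 := mul_eq_one_comm.mp hQQt
    set N : Matrix (Fin l ⊕ Fin m) (Fin l ⊕ Fin m) ℝ := fromBlocks P 0 0 Qᵀ with hN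
    have hNNt : N * Nᵀ = 1 := by
      rw [hN, fromBlocks_transpose]
      simp only [transpose_zero, transpose_transpose]
      rw [fromBlocks_multiply]
      simp [hPPt, hQtQ, fromBlocks_one]
    refine ⟨N.submatrix e.symm e.symm, ?_, ?_⟩
    · rw [Matrix.mem_orthogonalGroup_iff, transpose_submatrix,
        submatrix_mul_equiv, hNNt, submatrix_one_equiv]
    · rw [bridge]
      intro s
      cases s with
      | inl i =>
        rw [Fintype.sum_sum_type]
        simp [hN, padS, fromBlocks_apply₂₁]
      | inr j =>
        have key : ∀ j : Fin m, ∑ j' : Fin m, Q j j' • (Pᵀ * A j' * P) = B j := by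
          intro j
          have h1 : ∀ k', (∑ j' : Fin m, Q j j' * Q k' j') = (Q * Qᵀ) j k' := by
            intro k'
            simp [Matrix.mul_apply, Matrix.transpose_apply]
          calc ∑ j' : Fin m, Q j j' • (Pᵀ * A j' * P)
              = ∑ j' : Fin m, Q j j' • ∑ k' : Fin m, Q k' j' • B k' := by simp_rw [hPQ]
            _ = ∑ k' : Fin m, (∑ j' : Fin m, Q j j' * Q k' j') • B k' := by
                simp_rw [Finset.smul_sum, smul_smul, Finset.sum_smul]
                exact Finset.sum_comm
            _ = ∑ k' : Fin m, ((Q * Qᵀ) j k') • B k' := by simp_rw [h1]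
            _ = B j := by
                rw [hQQt]
                simp [Matrix.one_apply, ite_smul, Finset.sum_ite_eq]
        have hterm : ∀ j' : Fin m,
            (fromBlocks P (0 : Matrix (Fin l) (Fin m) ℝ) (0 : Matrix (Fin m) (Fin l) ℝ) Qᵀ)ᵀ *
              padS A (Sum.inr j') *
              (fromBlocks P (0 : Matrix (Fin l) (Fin m) ℝ) (0 : Matrix (Fin m) (Fin l) ℝ) Qᵀ)
            = fromBlocks (Pᵀ * A j' * P) 0 0 0 := by
          intro j'
          rw [fromBlocks_transpose]
          simp [padS, fromBlocks_multiply]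
        rw [Fintype.sum_sum_type]
        have hz : ∀ i' : Fin l, N (Sum.inl i') (Sum.inr j) • (Nᵀ * padS A (Sum.inl i') * N) = 0 := by
          intro i'
          simp [padS]
        rw [Finset.sum_congr rfl fun i' _ => hz i', Finset.sum_const_zero, zero_add]
        have hstep : ∀ j' : Fin m, N (Sum.inr j') (Sum.inr j) • (Nᵀ * padS A (Sum.inr j') * N)
            = fromBlocks (Q j j' • (Pᵀ * A j' * P)) (0 : Matrix (Fin l) (Fin m) ℝ)
              (0 : Matrix (Fin m) (Fin l) ℝ) (0 : Matrix (Fin m) (Fin m) ℝ) := by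
          intro j'
          rw [hN, hterm j', fromBlocks_apply₂₂, Matrix.transpose_apply, fromBlocks_smul,
            smul_zero, smul_zero, smul_zero]
        rw [Finset.sum_congr rfl fun j' _ => hstep j', sum_fromBlocks, key]
        simp [padS]
  · rintro ⟨Pb, hPb, hmain⟩
    have hPPt : Pb * Pbᵀ = 1 := by
      have := (Matrix.mem_orthogonalGroup_iff _ ℝ).mp hPb
      exact this
    set N : Matrix (Fin l ⊕ Fin m) (Fin l ⊕ Fin m) ℝ := Pb.submatrix e e with hN
    have hid : Pb = N.submatrix e.symm e.symm := by
      ext p q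
      simp [hN]
    have hNNt : N * Nᵀ = 1 := by
      rw [hN, transpose_submatrix, submatrix_mul_equiv, hPPt, submatrix_one_equiv]
    have hNtN : Nᵀ * N = 1 := mul_eq_one_comm.mp hNNt
    rw [hid] at hmain
    rw [bridge] at hmain
    -- invert the relation
    have h2 : ∀ t, Nᵀ * padS A t * N = ∑ s, N t s • padS B s := by
      intro t
      have hone : ∀ (X : (Fin l ⊕ Fin m) → Matrix (Fin l ⊕ Fin m) (Fin l ⊕ Fin m) ℝ),
          ∑ t', ((1 : Matrix (Fin l ⊕ Fin m) (Fin l ⊕ Fin m) ℝ) t t') • X t' = X t := by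
        intro X
        simp [Matrix.one_apply, ite_smul, Finset.sum_ite_eq]
      calc Nᵀ * padS A t * N
          = ∑ t', ((N * Nᵀ) t t') • (Nᵀ * padS A t' * N) := by rw [hNNt, hone]
        _ = ∑ s, N t s • (∑ t', N t' s • (Nᵀ * padS A t' * N)) := by
            simp_rw [Matrix.mul_apply, Matrix.transpose_apply, Finset.sum_smul, Finset.smul_sum,
              smul_smul]
            exact Finset.sum_comm
        _ = ∑ s, N t s • padS B s := by simp_rw [hmain]
    -- block (1,2) of N vanishes
    have h12 : ∀ (i : Fin l) (j : Fin m), N (Sum.inl i) (Sum.inr j) = 0 := by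
      intro i j
      have h0 := h2 (Sum.inl i)
      rw [Fintype.sum_sum_type] at h0
      have hz : ∀ i' : Fin l, N (Sum.inl i) (Sum.inl i') • padS B (Sum.inl i') = 0 := by
        intro i'
        simp [padS]
      rw [Finset.sum_congr rfl fun i' _ => hz i', Finset.sum_const_zero, zero_add] at h0
      have hz2 : (Nᵀ * padS A (Sum.inl i) * N) = 0 := by simp [padS]
      rw [hz2] at h0
      have hstep : ∀ j' : Fin m, N (Sum.inl i) (Sum.inr j') • padS B (Sum.inr j')
          = fromBlocks (N (Sum.inl i) (Sum.inr j') • B j') (0 : Matrix (Fin l) (Fin m) ℝ)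
            (0 : Matrix (Fin m) (Fin l) ℝ) (0 : Matrix (Fin m) (Fin m) ℝ) := by
        intro j'
        simp [padS, fromBlocks_smul]
      rw [Finset.sum_congr rfl fun j' _ => hstep j', sum_fromBlocks] at h0
      have hsum0 : ∑ j' : Fin m, N (Sum.inl i) (Sum.inr j') • B j' = 0 := by
        have := congrArg Matrix.toBlocks₁₁ h0.symm
        rw [toBlocks_fromBlocks₁₁] at this; rw [this]; ext; rfl
      exact Fintype.linearIndependent_iff.mp hB _ hsum0 j
    set P1 : Matrix (Fin l) (Fin l) ℝ := N.toBlocks₁₁ with hP1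
    set N21 : Matrix (Fin m) (Fin l) ℝ := N.toBlocks₂₁ with hN21
    set N22 : Matrix (Fin m) (Fin m) ℝ := N.toBlocks₂₂ with hN22
    have h12' : N.toBlocks₁₂ = 0 := by
      ext i j
      exact h12 i j
    have hNblocks : N = fromBlocks P1 0 N21 N22 := by
      conv_lhs => rw [← fromBlocks_toBlocks N]
      rw [h12']
    have e1 := hNNt
    rw [hNblocks, fromBlocks_transpose, transpose_zero, fromBlocks_multiply] at e1
    simp only [Matrix.mul_zero, Matrix.zero_mul, add_zero, zero_add] at e1
    have hP1o : P1 * P1ᵀ = 1 := by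
      have := congrArg Matrix.toBlocks₁₁ e1
      simpa [toBlocks_fromBlocks₁₁, toBlocks11_one] using this
    have e2 := hNtN
    rw [hNblocks, fromBlocks_transpose, transpose_zero, fromBlocks_multiply] at e2
    simp only [Matrix.mul_zero, Matrix.zero_mul, add_zero, zero_add] at e2
    have hN22o : N22ᵀ * N22 = 1 := by
      have := congrArg Matrix.toBlocks₂₂ e2
      simpa [toBlocks_fromBlocks₂₂, toBlocks22_one] using this
    refine ⟨P1, ?_, N22ᵀ, ?_, ?_⟩
    · rw [Matrix.mem_orthogonalGroup_iff]
      exact hP1o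
    · rw [Matrix.mem_orthogonalGroup_iff, transpose_transpose]
      exact hN22o
    · intro k
      have h3 := h2 (Sum.inr k)
      rw [Fintype.sum_sum_type] at h3
      have hz : ∀ i' : Fin l, N (Sum.inr k) (Sum.inl i') • padS B (Sum.inl i') = 0 := by
        intro i'
        simp [padS]
      rw [Finset.sum_congr rfl fun i' _ => hz i', Finset.sum_const_zero, zero_add] at h3
      have hL : Nᵀ * padS A (Sum.inr k) * N = fromBlocks (P1ᵀ * A k * P1) 0 0 0 := by
        rw [hNblocks, fromBlocks_transpose, transpose_zero]
        simp [padS, fromBlocks_multiply]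
      have hstep : ∀ j' : Fin m, N (Sum.inr k) (Sum.inr j') • padS B (Sum.inr j')
          = fromBlocks (N22 k j' • B j') (0 : Matrix (Fin l) (Fin m) ℝ)
            (0 : Matrix (Fin m) (Fin l) ℝ) (0 : Matrix (Fin m) (Fin m) ℝ) := by
        intro j'
        have hcc : N (Sum.inr k) (Sum.inr j') = N22 k j' := by
          rw [hNblocks, fromBlocks_apply₂₂]
        rw [hcc]
        simp [padS, fromBlocks_smul]
      rw [hL, Finset.sum_congr rfl fun j' _ => hstep j', sum_fromBlocks] at h3
      simp only [Matrix.transpose_apply]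
      have := congrArg Matrix.toBlocks₁₁ h3
      simpa [toBlocks_fromBlocks₁₁] using this
end

section
/- For any 3-way array A ∈ T(l×m×n, ℝ), there exist orthogonal matrices T₁ ∈ O(l, ℝ), T₂ ∈ O(m, ℝ), T₃ ∈ O(n, ℝ) and integers l' ≤ l, m' ≤ m, n' ≤ n such that the 3-way array B = (T₁ A T₂)^{T₃} satisfies: b_{i,j,k} = 0 whenever i > l' or j > m' or k > n', and the l'×m'×n' sub-array (b_{i,j,k})_{i∈[l'], j∈[m'], k∈[n']} is non-degenerate. -/
open Matrix Module

noncomputable section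

/-- Adapted orthonormal family: first `finrank Kᗮ` vectors in `Kᗮ`, the rest in `K`. -/
lemma exists_adapted (N : ℕ) (K : Submodule ℝ (EuclideanSpace ℝ (Fin N))) :
    ∃ (u : Fin N → EuclideanSpace ℝ (Fin N)) (r : ℕ) (_ : r ≤ N),
      Orthonormal ℝ u ∧ (∀ i : Fin N, (i : ℕ) < r → u i ∈ Kᗮ) ∧
      (∀ i : Fin N, r ≤ (i : ℕ) → u i ∈ K) := by
  classical
  set r := finrank ℝ Kᗮ with hr
  have hsum : finrank ℝ K + finrank ℝ Kᗮ = N := by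
    simpa [finrank_euclideanSpace_fin] using K.finrank_add_finrank_orthogonal
  have hrN : r ≤ N := by omega
  have hK : finrank ℝ K = N - r := by omega
  let b1 := stdOrthonormalBasis ℝ Kᗮ
  let b2 := stdOrthonormalBasis ℝ K
  refine ⟨fun i => if h : (i : ℕ) < r then (b1 ⟨i, h⟩ : _) else
    (b2 (⟨(i : ℕ) - r, by rw [hK]; omega⟩ : Fin (finrank ℝ K)) : _), r, hrN, ?_, ?_, ?_⟩
  · rw [orthonormal_iff_ite]
    intro i j
    by_cases hi : (i : ℕ) < r <;> by_cases hj : (j : ℕ) < r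
    · simp only [dif_pos hi, dif_pos hj]
      rw [← Submodule.coe_inner, orthonormal_iff_ite.mp b1.orthonormal]
      have : (⟨(i:ℕ), hi⟩ : Fin r) = ⟨(j:ℕ), hj⟩ ↔ i = j := by
        rw [Fin.ext_iff, Fin.ext_iff]
      simp [this]
    · have hij : i ≠ j := by intro h; subst h; exact hj hi
      simp only [dif_pos hi, dif_neg hj, if_neg hij]
      exact Submodule.inner_left_of_mem_orthogonal (b2 _).2 (b1 _).2
    · have hij : i ≠ j := by intro h; subst h; exact hi hj
      simp only [dif_neg hi, dif_pos hj, if_neg hij]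
      exact Submodule.inner_right_of_mem_orthogonal (b2 _).2 (b1 _).2
    · simp only [dif_neg hi, dif_neg hj]
      rw [← Submodule.coe_inner, orthonormal_iff_ite.mp b2.orthonormal]
      have : ((⟨(i:ℕ) - r, by rw [hK]; omega⟩ : Fin (finrank ℝ K))
           = ⟨(j:ℕ) - r, by rw [hK]; omega⟩) ↔ i = j := by
        simp only [Fin.ext_iff]; omega
      simp [this]
  · intro i hi; simp only [dif_pos hi]; exact (b1 _).2
  · intro i hi; simp only [dif_neg (by omega : ¬ (i:ℕ) < r)]; exact (b2 _).2

lemma key_reduce {N : ℕ} {E : Type*} [AddCommGroup E] [Module ℝ E] (v : Fin N → E) :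
    ∃ P : Matrix (Fin N) (Fin N) ℝ, P ∈ Matrix.orthogonalGroup (Fin N) ℝ ∧
      ∃ r, ∃ h : r ≤ N,
        (∀ i : Fin N, r ≤ (i : ℕ) → ∑ i', P i i' • v i' = 0) ∧
        LinearIndependent ℝ (fun i : Fin r => ∑ i', P (Fin.castLE h i) i' • v i') := by
  classical
  let φ : EuclideanSpace ℝ (Fin N) →ₗ[ℝ] E :=
    { toFun := fun x => ∑ i, x i • v i
      map_add' := by
        intro x y
        simp only [← Finset.sum_add_distrib]
        exact Finset.sum_congr rfl fun i _ => by
          show (x i + y i) • v i = _ ; rw [add_smul]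
      map_smul' := by
        intro c x
        simp only [RingHom.id_apply, Finset.smul_sum]
        exact Finset.sum_congr rfl fun i _ => by
          show (c * x i) • v i = _ ; rw [mul_smul] }
  obtain ⟨u, r, hrN, hon, hperp, hker⟩ := exists_adapted N (LinearMap.ker φ)
  refine ⟨Matrix.of (fun i j => u i j), ?_, r, hrN, ?_, ?_⟩
  · rw [Matrix.mem_orthogonalGroup_iff]
    ext i j
    have h := orthonormal_iff_ite.mp hon i j
    rw [PiLp.inner_apply] at h
    simp only [RCLike.inner_apply, starRingEnd_apply, star_trivial] at h
    simp only [Matrix.mul_apply, Matrix.one_apply, Matrix.star_eq_conjTranspose,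
      Matrix.conjTranspose_apply, Matrix.of_apply, star_trivial]
    simpa [mul_comm] using h
  · intro i hi
    show φ (u i) = 0
    exact LinearMap.mem_ker.mp (hker i hi)
  · rw [Fintype.linearIndependent_iff]
    intro g hg
    set z := ∑ i : Fin r, g i • u (Fin.castLE hrN i) with hz
    have hzK : z ∈ LinearMap.ker φ := by
      rw [LinearMap.mem_ker, hz, map_sum]
      simp only [_root_.map_smul]
      exact hg
    have hzP : z ∈ (LinearMap.ker φ)ᗮ := by
      rw [hz]
      exact Submodule.sum_mem _ fun i _ =>
        Submodule.smul_mem _ _ (hperp (Fin.castLE hrN i) (by simpa using i.2))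
    have hz0 : z = 0 := by
      have := (Submodule.orthogonal_disjoint (LinearMap.ker φ)).le_bot ⟨hzK, hzP⟩
      simp at this; exact this
    exact Fintype.linearIndependent_iff.mp
      (hon.linearIndependent.comp _ (Fin.castLE_injective hrN)) g hz0

lemma cancel_lr {a b : Type*} [Fintype a] [Fintype b] [DecidableEq a] [DecidableEq b]
    {P P' : Matrix a a ℝ} {Q Q' : Matrix b b ℝ}
    (hP : P' * P = 1) (hQ : Q * Q' = 1) {X : Matrix a b ℝ}
    (h : P * X * Q = 0) : X = 0 := by
  have h2 : X = P' * (P * X * Q) * Q' := by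
    calc X = (1 : Matrix a a ℝ) * X * (1 : Matrix b b ℝ) := by rw [Matrix.one_mul, Matrix.mul_one]
    _ = (P' * P) * X * (Q * Q') := by rw [hP, hQ]
    _ = P' * (P * X * Q) * Q' := by simp only [Matrix.mul_assoc]
  rw [h2, h, Matrix.mul_zero, Matrix.zero_mul]

end

open Matrix

/-- For any 3-way array `A ∈ T(l×m×n, ℝ)` there are orthogonal `T₁, T₂, T₃` and
`l' ≤ l`, `m' ≤ m`, `n' ≤ n` such that `B = (T₁ A T₂)^{T₃}` vanishes outside the leading
`l'×m'×n'` corner, and that corner is a non-degenerate 3-way array. -/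
theorem stmt_14 (l m n : ℕ) (A : Fin n → Matrix (Fin l) (Fin m) ℝ) :
    ∃ T₁ ∈ Matrix.orthogonalGroup (Fin l) ℝ, ∃ T₂ ∈ Matrix.orthogonalGroup (Fin m) ℝ,
      ∃ T₃ ∈ Matrix.orthogonalGroup (Fin n) ℝ,
      ∃ (l' m' n' : ℕ) (hl' : l' ≤ l) (hm' : m' ≤ m) (hn' : n' ≤ n),
        (∀ (i : Fin l) (j : Fin m) (k : Fin n),
            (l' ≤ (i : ℕ) ∨ m' ≤ (j : ℕ) ∨ n' ≤ (k : ℕ)) →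
            (∑ k' : Fin n, T₃ k' k • (T₁ * A k' * T₂)) i j = 0) ∧
        Nondegenerate₃ (fun (k : Fin n') =>
          Matrix.of fun (i : Fin l') (j : Fin m') =>
            (∑ k' : Fin n, T₃ k' (Fin.castLE hn' k) • (T₁ * A k' * T₂))
              (Fin.castLE hl' i) (Fin.castLE hm' j)) := by
  classical
  obtain ⟨P₁, hP₁, l', hl', hvan₁, hind₁⟩ :=
    key_reduce (fun i : Fin l => fun (j : Fin m) (k : Fin n) => A k i j)
  obtain ⟨P₂, hP₂, m', hm', hvan₂, hind₂⟩ :=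
    key_reduce (fun j : Fin m => fun (i : Fin l) (k : Fin n) => A k i j)
  obtain ⟨P₃, hP₃, n', hn', hvan₃, hind₃⟩ := key_reduce A
  have hstar : ∀ {N : ℕ} (P : Matrix (Fin N) (Fin N) ℝ), star P = Pᵀ := by
    intro N P; ext i j
    simp [Matrix.star_apply]
  have h1 : P₁ᵀ * P₁ = 1 := by rw [← hstar]; exact (Matrix.mem_orthogonalGroup_iff' (Fin l) ℝ).mp hP₁
  have h2 : P₂ᵀ * P₂ = 1 := by rw [← hstar]; exact (Matrix.mem_orthogonalGroup_iff' (Fin m) ℝ).mp hP₂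
  have h3 : P₃ᵀ * P₃ = 1 := by rw [← hstar]; exact (Matrix.mem_orthogonalGroup_iff' (Fin n) ℝ).mp hP₃
  have hT₂ : P₂ᵀ ∈ Matrix.orthogonalGroup (Fin m) ℝ := by
    rw [← hstar]; exact Unitary.star_mem hP₂
  have hT₃ : P₃ᵀ ∈ Matrix.orthogonalGroup (Fin n) ℝ := by
    rw [← hstar]; exact Unitary.star_mem hP₃
  have hC : ∀ (k : Fin n) (i : Fin l) (j : Fin m),
      (∑ k' : Fin n, P₃ᵀ k' k • (P₁ * A k' * P₂ᵀ)) i j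
        = ∑ k' : Fin n, ∑ j' : Fin m, ∑ i' : Fin l, P₃ k k' * P₂ j j' * P₁ i i' * A k' i' j' := by
    intro k i j
    simp only [Matrix.sum_apply, Matrix.smul_apply, smul_eq_mul, Matrix.transpose_apply,
      Matrix.mul_apply, Finset.sum_mul, Finset.mul_sum]
    refine Finset.sum_congr rfl fun k' _ => Finset.sum_congr rfl fun j' _ =>
      Finset.sum_congr rfl fun i' _ => by ring
  have hH1 : ∀ i : Fin l,
      (Matrix.of fun (j : Fin m) (k : Fin n) => (∑ k' : Fin n, P₃ᵀ k' k • (P₁ * A k' * P₂ᵀ)) i j)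
        = P₂ * Matrix.of (∑ i' : Fin l, P₁ i i' • fun (j : Fin m) (k : Fin n) => A k i' j) * P₃ᵀ := by
    intro i
    ext j k
    rw [Matrix.of_apply, hC]
    simp only [Matrix.mul_apply, Matrix.of_apply, Matrix.transpose_apply, Finset.sum_apply,
      Pi.smul_apply, smul_eq_mul, Finset.sum_mul, Finset.mul_sum]
    refine Finset.sum_congr rfl fun k' _ => Finset.sum_congr rfl fun j' _ =>
      Finset.sum_congr rfl fun i' _ => by ring
  have hH2 : ∀ j : Fin m,
      (Matrix.of fun (i : Fin l) (k : Fin n) => (∑ k' : Fin n, P₃ᵀ k' k • (P₁ * A k' * P₂ᵀ)) i j)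
        = P₁ * Matrix.of (∑ j' : Fin m, P₂ j j' • fun (i : Fin l) (k : Fin n) => A k i j') * P₃ᵀ := by
    intro j
    ext i k
    rw [Matrix.of_apply, hC]
    simp only [Matrix.mul_apply, Matrix.of_apply, Matrix.transpose_apply, Finset.sum_apply,
      Pi.smul_apply, smul_eq_mul, Finset.sum_mul, Finset.mul_sum]
    refine Finset.sum_congr rfl fun k' _ => ?_
    rw [Finset.sum_comm]
    refine Finset.sum_congr rfl fun i' _ => Finset.sum_congr rfl fun j' _ => by ring
  have hH3 : ∀ k : Fin n,
      (∑ k' : Fin n, P₃ᵀ k' k • (P₁ * A k' * P₂ᵀ))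
        = P₁ * (∑ k' : Fin n, P₃ k k' • A k') * P₂ᵀ := by
    intro k
    ext i j
    rw [hC]
    simp only [Matrix.mul_apply, Matrix.sum_apply, Matrix.smul_apply, Matrix.transpose_apply,
      smul_eq_mul, Finset.sum_mul, Finset.mul_sum]
    rw [Finset.sum_comm]
    refine Finset.sum_congr rfl fun j' _ => ?_
    rw [Finset.sum_comm]
    refine Finset.sum_congr rfl fun i' _ => Finset.sum_congr rfl fun k' _ => by ring
  have hvanC : ∀ (i : Fin l) (j : Fin m) (k : Fin n),
      (l' ≤ (i : ℕ) ∨ m' ≤ (j : ℕ) ∨ n' ≤ (k : ℕ)) →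
      (∑ k' : Fin n, P₃ᵀ k' k • (P₁ * A k' * P₂ᵀ)) i j = 0 := by
    intro i j k hcase
    rcases hcase with hi | hj | hk
    · have h := congrFun (congrFun (hH1 i) j) k
      simp only [Matrix.of_apply] at h
      rw [h, hvan₁ i hi]
      simp [Matrix.mul_apply]
    · have h := congrFun (congrFun (hH2 j) i) k
      simp only [Matrix.of_apply] at h
      rw [h, hvan₂ j hj]
      simp [Matrix.mul_apply]
    · rw [hH3 k, hvan₃ k hk]
      simp
  refine ⟨P₁, hP₁, P₂ᵀ, hT₂, P₃ᵀ, hT₃, l', m', n', hl', hm', hn', hvanC, ?_, ?_, ?_⟩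
  · -- horizontal slices of the corner
    rw [Fintype.linearIndependent_iff]
    intro g hg
    have hS : ∑ i : Fin l', g i • (Matrix.of fun (j : Fin m) (k : Fin n) =>
        (∑ k' : Fin n, P₃ᵀ k' k • (P₁ * A k' * P₂ᵀ)) (Fin.castLE hl' i) j)
        = (0 : Matrix (Fin m) (Fin n) ℝ) := by
      ext j k
      by_cases hj : (j : ℕ) < m'
      · by_cases hk : (k : ℕ) < n'
        · have h := congrFun (congrFun hg ⟨(j : ℕ), hj⟩) ⟨(k : ℕ), hk⟩
          simp only [Matrix.sum_apply, Matrix.smul_apply, Matrix.of_apply, smul_eq_mul,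
            Matrix.zero_apply, Finset.sum_apply, Pi.smul_apply, Pi.zero_apply] at h ⊢
          exact h
        · simp only [Matrix.sum_apply, Matrix.zero_apply, Matrix.smul_apply, Matrix.of_apply,
            smul_eq_mul]
          refine Finset.sum_eq_zero fun i _ => ?_
          have h0 := hvanC (Fin.castLE hl' i) j k (Or.inr (Or.inr (Nat.le_of_not_lt hk)))
          simp only [Matrix.sum_apply, Matrix.smul_apply, smul_eq_mul] at h0
          rw [h0, mul_zero]
      · simp only [Matrix.sum_apply, Matrix.zero_apply, Matrix.smul_apply, Matrix.of_apply,
          smul_eq_mul]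
        refine Finset.sum_eq_zero fun i _ => ?_
        have h0 := hvanC (Fin.castLE hl' i) j k (Or.inr (Or.inl (Nat.le_of_not_lt hj)))
        simp only [Matrix.sum_apply, Matrix.smul_apply, smul_eq_mul] at h0
        rw [h0, mul_zero]
    simp only [hH1] at hS
    have hS2 : P₂ * (∑ i : Fin l', g i • Matrix.of
        (∑ i' : Fin l, P₁ (Fin.castLE hl' i) i' • fun (j : Fin m) (k : Fin n) => A k i' j)) * P₃ᵀ
        = 0 := by
      rw [Matrix.mul_sum, Matrix.sum_mul]
      simpa only [Matrix.mul_smul, Matrix.smul_mul] using hS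
    have hD := cancel_lr h2 h3 hS2
    exact Fintype.linearIndependent_iff.mp hind₁ g hD
  · -- lateral slices of the corner
    rw [Fintype.linearIndependent_iff]
    intro g hg
    have hS : ∑ j : Fin m', g j • (Matrix.of fun (i : Fin l) (k : Fin n) =>
        (∑ k' : Fin n, P₃ᵀ k' k • (P₁ * A k' * P₂ᵀ)) i (Fin.castLE hm' j))
        = (0 : Matrix (Fin l) (Fin n) ℝ) := by
      ext i k
      by_cases hi : (i : ℕ) < l'
      · by_cases hk : (k : ℕ) < n'
        · have h := congrFun (congrFun hg ⟨(i : ℕ), hi⟩) ⟨(k : ℕ), hk⟩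
          simp only [Matrix.sum_apply, Matrix.smul_apply, Matrix.of_apply, smul_eq_mul,
            Matrix.zero_apply, Finset.sum_apply, Pi.smul_apply, Pi.zero_apply] at h ⊢
          exact h
        · simp only [Matrix.sum_apply, Matrix.zero_apply, Matrix.smul_apply, Matrix.of_apply,
            smul_eq_mul]
          refine Finset.sum_eq_zero fun jj _ => ?_
          have h0 := hvanC i (Fin.castLE hm' jj) k (Or.inr (Or.inr (Nat.le_of_not_lt hk)))
          simp only [Matrix.sum_apply, Matrix.smul_apply, smul_eq_mul] at h0
          rw [h0, mul_zero]
      · simp only [Matrix.sum_apply, Matrix.zero_apply, Matrix.smul_apply, Matrix.of_apply,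
          smul_eq_mul]
        refine Finset.sum_eq_zero fun jj _ => ?_
        have h0 := hvanC i (Fin.castLE hm' jj) k (Or.inl (Nat.le_of_not_lt hi))
        simp only [Matrix.sum_apply, Matrix.smul_apply, smul_eq_mul] at h0
        rw [h0, mul_zero]
    simp only [hH2] at hS
    have hS2 : P₁ * (∑ j : Fin m', g j • Matrix.of
        (∑ j' : Fin m, P₂ (Fin.castLE hm' j) j' • fun (i : Fin l) (k : Fin n) => A k i j')) * P₃ᵀ
        = 0 := by
      rw [Matrix.mul_sum, Matrix.sum_mul]
      simpa only [Matrix.mul_smul, Matrix.smul_mul] using hS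
    have hD := cancel_lr h1 h3 hS2
    exact Fintype.linearIndependent_iff.mp hind₂ g hD
  · -- frontal slices of the corner
    rw [Fintype.linearIndependent_iff]
    intro g hg
    have hS : ∑ k : Fin n', g k •
        (∑ k' : Fin n, P₃ᵀ k' (Fin.castLE hn' k) • (P₁ * A k' * P₂ᵀ))
        = (0 : Matrix (Fin l) (Fin m) ℝ) := by
      ext i j
      by_cases hi : (i : ℕ) < l'
      · by_cases hj : (j : ℕ) < m'
        · have h := congrFun (congrFun hg ⟨(i : ℕ), hi⟩) ⟨(j : ℕ), hj⟩
          simp only [Matrix.sum_apply, Matrix.smul_apply, Matrix.of_apply, smul_eq_mul,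
            Matrix.zero_apply, Finset.sum_apply, Pi.smul_apply, Pi.zero_apply] at h ⊢
          exact h
        · simp only [Matrix.sum_apply, Matrix.zero_apply, Matrix.smul_apply, smul_eq_mul]
          refine Finset.sum_eq_zero fun kk _ => ?_
          have h0 := hvanC i j (Fin.castLE hn' kk) (Or.inr (Or.inl (Nat.le_of_not_lt hj)))
          simp only [Matrix.sum_apply, Matrix.smul_apply, smul_eq_mul] at h0
          rw [h0, mul_zero]
      · simp only [Matrix.sum_apply, Matrix.zero_apply, Matrix.smul_apply, smul_eq_mul]
        refine Finset.sum_eq_zero fun kk _ => ?_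
        have h0 := hvanC i j (Fin.castLE hn' kk) (Or.inl (Nat.le_of_not_lt hi))
        simp only [Matrix.sum_apply, Matrix.smul_apply, smul_eq_mul] at h0
        rw [h0, mul_zero]
    simp only [hH3] at hS
    have hS2 : P₁ * (∑ k : Fin n', g k •
        (∑ k' : Fin n, P₃ (Fin.castLE hn' k) k' • A k')) * P₂ᵀ = 0 := by
      rw [Matrix.mul_sum, Matrix.sum_mul]
      simpa only [Matrix.mul_smul, Matrix.smul_mul] using hS
    have hD := cancel_lr h1 h2 hS2
    exact Fintype.linearIndependent_iff.mp hind₃ g hD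
end
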